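/- arXiv:math/0203283 — 5 statements merged into one kernel-verified Lean document; each statement's English description precedes it below -/
import Mathlib

section
/- If a ∈ \widehat{ℤG}_χ satisfies ‖a‖ < 1, then for every g ∈ G only finitely many of the integers (a^k)(g), k ≥ 0, are nonzero, the function b(g) = Σ_{k=0}^∞ (a^k)(g) is a well-defined element of \widehat{ℤG}_χ, and b is a two-sided inverse of 1 − a, i.e. (1−a)·b = b·(1−a) = 1. In particular 1 − a is a unit of \widehat{ℤG}_χ. -/
variable {G : Type*}

/-- The Novikov support condition: for every `r : ℝ` the set
`supp(l) ∩ χ⁻¹([r,∞))` is finite.  The Novikov ring `ℤG^` is the set of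
functions `l : G → ℤ` satisfying this condition. -/
def NovikovCond [Group G] (χ : G → ℝ) (l : G → ℤ) : Prop :=
  ∀ r : ℝ, {g : G | l g ≠ 0 ∧ r ≤ χ g}.Finite

/-- Convolution product `(l₁·l₂)(g) = Σ_{h₁h₂=g} l₁(h₁)·l₂(h₂)`. -/
noncomputable def novConv [Group G] (l₁ l₂ : G → ℤ) : G → ℤ :=
  fun g => ∑ᶠ p ∈ {p : G × G | p.1 * p.2 = g}, l₁ p.1 * l₂ p.2

open Classical in
/-- The unit of the Novikov ring: the indicator function of the identity of `G`. -/
noncomputable def novOne [Group G] : G → ℤ :=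
  fun g => if g = 1 then 1 else 0

open Classical in
/-- The norm `‖l‖ = exp (sup {χ g | g ∈ supp l})` for `l ≠ 0`, and `‖0‖ = 0`. -/
noncomputable def novNorm [Group G] (χ : G → ℝ) (l : G → ℤ) : ℝ :=
  if l = 0 then 0 else Real.exp (sSup {x : ℝ | ∃ g : G, l g ≠ 0 ∧ χ g = x})

/-- Powers in the Novikov ring with respect to the convolution product. -/
noncomputable def novPow [Group G] (a : G → ℤ) : ℕ → (G → ℤ)
  | 0 => novOne
  | k + 1 => novConv a (novPow a k)

section NovikovAux

variable [Group G] {χ : G → ℝ}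

lemma convSum_left (l₁ l₂ : G → ℤ) (g : G) (F : Finset G)
    (hF : ∀ h : G, l₁ h ≠ 0 → l₂ (h⁻¹ * g) ≠ 0 → h ∈ F) :
    novConv l₁ l₂ g = ∑ h ∈ F, l₁ h * l₂ (h⁻¹ * g) := by
  classical
  rw [novConv,
    finsum_mem_eq_sum_of_inter_support_eq (fun p : G × G => l₁ p.1 * l₂ p.2)
      (t := F.image fun h : G => (h, h⁻¹ * g)) ?_,
    Finset.sum_image (fun x _ y _ h => congrArg Prod.fst h)]
  ext p
  simp only [Set.mem_inter_iff, Set.mem_setOf_eq, Function.mem_support, Finset.coe_image,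
    Set.mem_image, Finset.mem_coe]
  constructor
  · rintro ⟨hp, hne⟩
    have h2 : p.2 = p.1⁻¹ * g := by rw [← hp]; group
    refine ⟨⟨p.1, hF p.1 (left_ne_zero_of_mul hne)
      (by rw [← h2]; exact right_ne_zero_of_mul hne), ?_⟩, hne⟩
    rw [← h2]
  · rintro ⟨⟨h, _, rfl⟩, hne⟩
    exact ⟨by simp, hne⟩

lemma convSum_right (l₁ l₂ : G → ℤ) (g : G) (F : Finset G)
    (hF : ∀ h : G, l₁ (g * h⁻¹) ≠ 0 → l₂ h ≠ 0 → h ∈ F) :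
    novConv l₁ l₂ g = ∑ h ∈ F, l₁ (g * h⁻¹) * l₂ h := by
  classical
  rw [novConv,
    finsum_mem_eq_sum_of_inter_support_eq (fun p : G × G => l₁ p.1 * l₂ p.2)
      (t := F.image fun h : G => (g * h⁻¹, h)) ?_,
    Finset.sum_image (fun x _ y _ h => congrArg Prod.snd h)]
  ext p
  simp only [Set.mem_inter_iff, Set.mem_setOf_eq, Function.mem_support, Finset.coe_image,
    Set.mem_image, Finset.mem_coe]
  constructor
  · rintro ⟨hp, hne⟩
    have h2 : p.1 = g * p.2⁻¹ := by rw [← hp]; group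
    refine ⟨⟨p.2, hF p.2 (by rw [← h2]; exact left_ne_zero_of_mul hne)
      (right_ne_zero_of_mul hne), ?_⟩, hne⟩
    rw [← h2]
  · rintro ⟨⟨h, _, rfl⟩, hne⟩
    exact ⟨by simp, hne⟩

lemma novConv_ne_zero_left {l₁ l₂ : G → ℤ} {g : G} (h : novConv l₁ l₂ g ≠ 0) :
    ∃ x : G, l₁ x ≠ 0 ∧ l₂ (x⁻¹ * g) ≠ 0 := by
  by_contra hc
  push_neg at hc
  apply h
  rw [novConv]
  apply finsum_mem_of_eqOn_zero
  rintro ⟨p1, p2⟩ hp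
  simp only [Set.mem_setOf_eq] at hp
  have h2 : p2 = p1⁻¹ * g := by rw [← hp]; group
  rcases eq_or_ne (l₁ p1) 0 with h0 | h0
  · simp [h0]
  · have := hc p1 h0
    rw [← h2] at this
    simp [this]

lemma nov_bound {l : G → ℤ} (hl : NovikovCond χ l) :
    ∃ C : ℝ, 0 ≤ C ∧ ∀ g : G, l g ≠ 0 → χ g ≤ C := by
  obtain ⟨C, hC⟩ := ((hl 0).image χ).bddAbove
  refine ⟨max C 0, le_max_right _ _, fun g hg => ?_⟩
  rcases le_or_gt (χ g) 0 with h | h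
  · exact h.trans (le_max_right _ _)
  · exact le_trans (hC ⟨g, ⟨hg, h.le⟩, rfl⟩) (le_max_left _ _)

lemma novikov_novOne : NovikovCond χ (novOne : G → ℤ) := by
  intro r
  apply Set.Finite.subset (Set.finite_singleton (1 : G))
  intro g hg
  simp only [Set.mem_setOf_eq, novOne] at hg
  simp only [Set.mem_singleton_iff]
  by_contra h
  simp [h] at hg


lemma chi_one (hχ : ∀ a b : G, χ (a * b) = χ a + χ b) : χ 1 = 0 := by
  have := hχ 1 1; simp at this; linarith

lemma chi_inv_mul (hχ : ∀ a b : G, χ (a * b) = χ a + χ b) (x g : G) :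
    χ (x⁻¹ * g) = χ g - χ x := by
  have h := hχ x (x⁻¹ * g)
  rw [mul_inv_cancel_left] at h
  linarith

lemma chi_mul_inv (hχ : ∀ a b : G, χ (a * b) = χ a + χ b) (x g : G) :
    χ (g * x⁻¹) = χ g - χ x := by
  have h := hχ (g * x⁻¹) x
  rw [inv_mul_cancel_right] at h
  linarith

lemma novikov_conv (hχ : ∀ a b : G, χ (a * b) = χ a + χ b) {l₁ l₂ : G → ℤ}
    (h₁ : NovikovCond χ l₁) (h₂ : NovikovCond χ l₂) : NovikovCond χ (novConv l₁ l₂) := by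
  obtain ⟨C₁, _, hC₁⟩ := nov_bound h₁
  obtain ⟨C₂, _, hC₂⟩ := nov_bound h₂
  intro r
  apply Set.Finite.subset (Set.Finite.image2 (· * ·) (h₁ (r - C₂)) (h₂ (r - C₁)))
  rintro g ⟨hg, hr⟩
  obtain ⟨x, hx1, hx2⟩ := novConv_ne_zero_left hg
  have he : χ (x⁻¹ * g) = χ g - χ x := chi_inv_mul hχ x g
  have b1 : χ x ≤ C₁ := hC₁ x hx1
  have b2 : χ (x⁻¹ * g) ≤ C₂ := hC₂ _ hx2
  exact ⟨x, ⟨hx1, by linarith⟩, x⁻¹ * g, ⟨hx2, by linarith⟩, by group⟩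

lemma conv_assoc (hχ : ∀ a b : G, χ (a * b) = χ a + χ b) {l₁ l₂ l₃ : G → ℤ}
    (h₁ : NovikovCond χ l₁) (h₂ : NovikovCond χ l₂) (h₃ : NovikovCond χ l₃) (g : G) :
    novConv l₁ (novConv l₂ l₃) g = novConv (novConv l₁ l₂) l₃ g := by
  classical
  obtain ⟨C₁, _, hC₁⟩ := nov_bound h₁
  obtain ⟨C₂, _, hC₂⟩ := nov_bound h₂
  obtain ⟨C₃, _, hC₃⟩ := nov_bound h₃
  set F₁ : Finset G := (h₁ (χ g - C₂ - C₃)).toFinset with hF₁def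
  set F₃ : Finset G := (h₃ (χ g - C₁ - C₂)).toFinset with hF₃def
  have hF₁mem : ∀ x, x ∈ F₁ ↔ l₁ x ≠ 0 ∧ χ g - C₂ - C₃ ≤ χ x := by
    intro x; rw [hF₁def, Set.Finite.mem_toFinset]; rfl
  have hF₃mem : ∀ x, x ∈ F₃ ↔ l₃ x ≠ 0 ∧ χ g - C₁ - C₂ ≤ χ x := by
    intro x; rw [hF₃def, Set.Finite.mem_toFinset]; rfl
  have hL : novConv l₁ (novConv l₂ l₃) g = ∑ x ∈ F₁, l₁ x * novConv l₂ l₃ (x⁻¹ * g) := by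
    apply convSum_left
    intro x hx1 hx2
    obtain ⟨y, hy1, hy2⟩ := novConv_ne_zero_left hx2
    have e1 : χ (x⁻¹ * g) = χ g - χ x := chi_inv_mul hχ x g
    have e2 : χ (y⁻¹ * (x⁻¹ * g)) = χ (x⁻¹ * g) - χ y := chi_inv_mul hχ y _
    have b2 := hC₂ y hy1
    have b3 := hC₃ _ hy2
    exact (hF₁mem x).2 ⟨hx1, by linarith⟩
  have hR : novConv (novConv l₁ l₂) l₃ g = ∑ v ∈ F₃, novConv l₁ l₂ (g * v⁻¹) * l₃ v := by
    apply convSum_right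
    intro v hv1 hv2
    obtain ⟨y, hy1, hy2⟩ := novConv_ne_zero_left hv1
    have e1 : χ (g * v⁻¹) = χ g - χ v := chi_mul_inv hχ v g
    have e2 : χ (y⁻¹ * (g * v⁻¹)) = χ (g * v⁻¹) - χ y := chi_inv_mul hχ y _
    have b1 := hC₁ y hy1
    have b2 := hC₂ _ hy2
    exact (hF₃mem v).2 ⟨hv2, by linarith⟩
  have hL2 : ∀ x ∈ F₁, novConv l₂ l₃ (x⁻¹ * g)
      = ∑ v ∈ F₃, l₂ (x⁻¹ * g * v⁻¹) * l₃ v := by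
    intro x hx
    obtain ⟨hx1, _⟩ := (hF₁mem x).1 hx
    have b1 := hC₁ x hx1
    have h := convSum_right l₂ l₃ (x⁻¹ * g) F₃ ?_
    · exact h
    · intro v hv1 hv2
      have e1 : χ (x⁻¹ * g) = χ g - χ x := chi_inv_mul hχ x g
      have e2 : χ ((x⁻¹ * g) * v⁻¹) = χ (x⁻¹ * g) - χ v := chi_mul_inv hχ v _
      have b2 := hC₂ _ hv1
      exact (hF₃mem v).2 ⟨hv2, by linarith⟩
  have hR2 : ∀ v ∈ F₃, novConv l₁ l₂ (g * v⁻¹)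
      = ∑ x ∈ F₁, l₁ x * l₂ (x⁻¹ * g * v⁻¹) := by
    intro v hv
    obtain ⟨hv1, _⟩ := (hF₃mem v).1 hv
    have b3 := hC₃ v hv1
    have h := convSum_left l₁ l₂ (g * v⁻¹) F₁ ?_
    · rw [h]
      apply Finset.sum_congr rfl
      intro x _
      rw [mul_assoc]
    · intro x hx1 hx2
      have e1 : χ (g * v⁻¹) = χ g - χ v := chi_mul_inv hχ v g
      have e2 : χ (x⁻¹ * (g * v⁻¹)) = χ (g * v⁻¹) - χ x := chi_inv_mul hχ x _
      have b2 := hC₂ _ hx2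
      exact (hF₁mem x).2 ⟨hx1, by linarith⟩
  have e1 : ∑ x ∈ F₁, l₁ x * novConv l₂ l₃ (x⁻¹ * g)
      = ∑ x ∈ F₁, l₁ x * ∑ v ∈ F₃, l₂ (x⁻¹ * g * v⁻¹) * l₃ v :=
    Finset.sum_congr rfl (fun x hx => by rw [hL2 x hx])
  have e2 : ∑ v ∈ F₃, novConv l₁ l₂ (g * v⁻¹) * l₃ v
      = ∑ v ∈ F₃, (∑ x ∈ F₁, l₁ x * l₂ (x⁻¹ * g * v⁻¹)) * l₃ v :=
    Finset.sum_congr rfl (fun v hv => by rw [hR2 v hv])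
  rw [hL, hR, e1, e2]
  simp only [Finset.sum_mul, Finset.mul_sum, mul_assoc]
  exact Finset.sum_comm


lemma novConv_one_left (l : G → ℤ) : novConv novOne l = l := by
  funext g
  rw [convSum_left novOne l g {1} (fun h h1 _ => by
    simp only [novOne, ne_eq, ite_eq_right_iff, not_forall] at h1
    simp [h1.1])]
  simp [novOne]

lemma novConv_one_right (l : G → ℤ) : novConv l novOne = l := by
  funext g
  rw [convSum_right l novOne g {1} (fun h _ h2 => by
    simp only [novOne, ne_eq, ite_eq_right_iff, not_forall] at h2
    simp [h2.1])]
  simp [novOne]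

lemma conv_sub_left (hχ : ∀ a b : G, χ (a * b) = χ a + χ b) {l₁ l₂ l₃ : G → ℤ}
    (h₁ : NovikovCond χ l₁) (h₂ : NovikovCond χ l₂) (h₃ : NovikovCond χ l₃) :
    novConv (l₁ - l₂) l₃ = novConv l₁ l₃ - novConv l₂ l₃ := by
  classical
  funext g
  obtain ⟨C₃, _, hC₃⟩ := nov_bound h₃
  set F : Finset G := (h₁ (χ g - C₃)).toFinset ∪ (h₂ (χ g - C₃)).toFinset with hFdef
  have cap : ∀ (l : G → ℤ), (∀ x : G, l x ≠ 0 → l₁ x ≠ 0 ∨ l₂ x ≠ 0) →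
      ∀ h : G, l h ≠ 0 → l₃ (h⁻¹ * g) ≠ 0 → h ∈ F := by
    intro l hl h hh1 hh2
    have e : χ (h⁻¹ * g) = χ g - χ h := chi_inv_mul hχ h g
    have b3 := hC₃ _ hh2
    rw [hFdef, Finset.mem_union, Set.Finite.mem_toFinset, Set.Finite.mem_toFinset]
    rcases hl h hh1 with h' | h'
    · exact Or.inl ⟨h', by linarith⟩
    · exact Or.inr ⟨h', by linarith⟩
  rw [Pi.sub_apply,
    convSum_left (l₁ - l₂) l₃ g F (cap _ (fun x hx => by
      by_contra hcon
      push_neg at hcon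
      simp [Pi.sub_apply, hcon.1, hcon.2] at hx)),
    convSum_left l₁ l₃ g F (cap l₁ (fun x hx => Or.inl hx)),
    convSum_left l₂ l₃ g F (cap l₂ (fun x hx => Or.inr hx)),
    ← Finset.sum_sub_distrib]
  apply Finset.sum_congr rfl
  intro x _
  simp [sub_mul]

lemma conv_sub_right (hχ : ∀ a b : G, χ (a * b) = χ a + χ b) {l₁ l₂ l₃ : G → ℤ}
    (h₁ : NovikovCond χ l₁) (h₂ : NovikovCond χ l₂) (h₃ : NovikovCond χ l₃) :
    novConv l₃ (l₁ - l₂) = novConv l₃ l₁ - novConv l₃ l₂ := by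
  classical
  funext g
  obtain ⟨C₃, _, hC₃⟩ := nov_bound h₃
  set F : Finset G := (h₁ (χ g - C₃)).toFinset ∪ (h₂ (χ g - C₃)).toFinset with hFdef
  have cap : ∀ (l : G → ℤ), (∀ x : G, l x ≠ 0 → l₁ x ≠ 0 ∨ l₂ x ≠ 0) →
      ∀ h : G, l₃ (g * h⁻¹) ≠ 0 → l h ≠ 0 → h ∈ F := by
    intro l hl h hh1 hh2
    have e : χ (g * h⁻¹) = χ g - χ h := chi_mul_inv hχ h g
    have b3 := hC₃ _ hh1
    rw [hFdef, Finset.mem_union, Set.Finite.mem_toFinset, Set.Finite.mem_toFinset]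
    rcases hl h hh2 with h' | h'
    · exact Or.inl ⟨h', by linarith⟩
    · exact Or.inr ⟨h', by linarith⟩
  rw [Pi.sub_apply,
    convSum_right l₃ (l₁ - l₂) g F (cap _ (fun x hx => by
      by_contra hcon
      push_neg at hcon
      simp [Pi.sub_apply, hcon.1, hcon.2] at hx)),
    convSum_right l₃ l₁ g F (cap l₁ (fun x hx => Or.inl hx)),
    convSum_right l₃ l₂ g F (cap l₂ (fun x hx => Or.inr hx)),
    ← Finset.sum_sub_distrib]
  apply Finset.sum_congr rfl
  intro x _
  simp [mul_sub]


lemma novikov_pow (hχ : ∀ a b : G, χ (a * b) = χ a + χ b) {a : G → ℤ}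
    (ha : NovikovCond χ a) : ∀ k : ℕ, NovikovCond χ (novPow a k)
  | 0 => novikov_novOne
  | k + 1 => novikov_conv hχ ha (novikov_pow hχ ha k)

lemma pow_chi_bound (hχ : ∀ a b : G, χ (a * b) = χ a + χ b) {a : G → ℤ} {c : ℝ}
    (hc : ∀ g : G, a g ≠ 0 → χ g ≤ c) :
    ∀ (k : ℕ) (g : G), novPow a k g ≠ 0 → χ g ≤ k * c := by
  intro k
  induction k with
  | zero =>
    intro g hg
    simp only [novPow, novOne, ne_eq, ite_eq_right_iff, not_forall] at hg
    rw [hg.1, chi_one hχ]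
    simp
  | succ k ih =>
    intro g hg
    obtain ⟨x, hx1, hx2⟩ := novConv_ne_zero_left hg
    have e : χ (x⁻¹ * g) = χ g - χ x := chi_inv_mul hχ x g
    have b1 := hc x hx1
    have b2 := ih _ hx2
    push_cast
    linarith

lemma pow_succ_right (hχ : ∀ a b : G, χ (a * b) = χ a + χ b) {a : G → ℤ}
    (ha : NovikovCond χ a) : ∀ k : ℕ, novConv (novPow a k) a = novPow a (k + 1) := by
  intro k
  induction k with
  | zero => show novConv novOne a = novConv a novOne
            rw [novConv_one_left, novConv_one_right]
  | succ k ih =>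
    show novConv (novConv a (novPow a k)) a = novConv a (novPow a (k + 1))
    rw [← ih]
    funext g
    exact (conv_assoc hχ ha (novikov_pow hχ ha k) ha g).symm

end NovikovAux

/-- If `a ∈ ℤG^_χ` has `‖a‖ < 1`, then for every `g ∈ G` only
finitely many of the integers `(a^k)(g)` are nonzero, the function
`b(g) = Σ_{k=0}^∞ (a^k)(g)` is a well-defined element of `ℤG^_χ`, and `b` is a
two-sided inverse of `1 − a`; in particular `1 − a` is a unit of `ℤG^_χ`. -/
theorem statement5 [Group G] (χ : G → ℝ) (hχ : ∀ a b : G, χ (a * b) = χ a + χ b)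
    (a : G → ℤ) (ha : NovikovCond χ a) (hnorm : novNorm χ a < 1) :
    (∀ g : G, {k : ℕ | novPow a k g ≠ 0}.Finite) ∧
    NovikovCond χ (fun g => ∑ᶠ k : ℕ, novPow a k g) ∧
    novConv (novOne - a) (fun g => ∑ᶠ k : ℕ, novPow a k g) = novOne ∧
    novConv (fun g => ∑ᶠ k : ℕ, novPow a k g) (novOne - a) = novOne := by
  classical
  obtain ⟨c, hc0, hc⟩ : ∃ c : ℝ, c < 0 ∧ ∀ g : G, a g ≠ 0 → χ g ≤ c := by
    by_cases hA : a = 0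
    · exact ⟨-1, by norm_num, fun g hg => by simp [hA] at hg⟩
    · rw [novNorm, if_neg hA] at hnorm
      have hlt : sSup {x : ℝ | ∃ g : G, a g ≠ 0 ∧ χ g = x} < 0 := by
        by_contra hcon
        push_neg at hcon
        refine absurd hnorm (not_lt.2 ?_)
        calc (1:ℝ) = Real.exp 0 := by simp
        _ ≤ _ := Real.exp_le_exp.2 hcon
      refine ⟨_, hlt, fun g hg => le_csSup ?_ ⟨g, hg, rfl⟩⟩
      obtain ⟨C, _, hC⟩ := nov_bound ha
      exact ⟨C, by rintro x ⟨g, hg, rfl⟩; exact hC g hg⟩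
  have part1 : ∀ g : G, {k : ℕ | novPow a k g ≠ 0}.Finite := by
    intro g
    obtain ⟨N, hN⟩ := exists_nat_ge (χ g / c)
    apply Set.Finite.subset (Set.finite_Iic N)
    intro k hk
    simp only [Set.mem_setOf_eq] at hk
    have h1 : χ g ≤ k * c := pow_chi_bound hχ hc k g hk
    have h2 : (k:ℝ) ≤ χ g / c := by rw [le_div_iff_of_neg hc0]; linarith
    exact Set.mem_Iic.2 (Nat.cast_le.1 (h2.trans hN))
  set b : G → ℤ := fun g => ∑ᶠ k : ℕ, novPow a k g with hbdef
  have hbne : ∀ g : G, b g ≠ 0 → ∃ k : ℕ, novPow a k g ≠ 0 := by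
    intro g h
    by_contra hcon
    push_neg at hcon
    exact h (finsum_eq_zero_of_forall_eq_zero hcon)
  have part2 : NovikovCond χ b := by
    intro r
    obtain ⟨N, hN⟩ := exists_nat_ge (r / c)
    apply Set.Finite.subset
      (Set.Finite.biUnion (Set.finite_Iic N) (fun k _ => novikov_pow hχ ha k r))
    rintro g ⟨hg, hr⟩
    obtain ⟨k, hk⟩ := hbne g hg
    have h1 : χ g ≤ k * c := pow_chi_bound hχ hc k g hk
    have h2 : (k:ℝ) ≤ r / c := by rw [le_div_iff_of_neg hc0]; linarith
    exact Set.mem_biUnion (Set.mem_Iic.2 (Nat.cast_le.1 (h2.trans hN))) ⟨hk, hr⟩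
  obtain ⟨Cb, hCb0, hCb⟩ := nov_bound part2
  have hkey : ∀ g : G, novConv a b g = b g - novOne g ∧ novConv b a g = b g - novOne g := by
    intro g
    obtain ⟨N, hN⟩ := exists_nat_ge (χ g / c)
    set F : Finset G := (ha (χ g - Cb)).toFinset with hFdef
    have hFmem : ∀ x : G, x ∈ F ↔ a x ≠ 0 ∧ χ g - Cb ≤ χ x := by
      intro x; rw [hFdef, Set.Finite.mem_toFinset]; rfl
    have hrange : ∀ (x : G) (k : ℕ), χ g - c ≤ χ x → novPow a k x ≠ 0 →
        k ∈ Finset.range (N + 1) := by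
      intro x k hx hk
      have h1 : χ x ≤ k * c := pow_chi_bound hχ hc k x hk
      have h3 : ((k:ℝ) + 1) ≤ χ g / c := by
        rw [le_div_iff_of_neg hc0]; nlinarith
      have h4 : k + 1 ≤ N := by exact_mod_cast (by push_cast; linarith : ((k+1:ℕ):ℝ) ≤ N)
      rw [Finset.mem_range]; omega
    have hb_at : ∀ x : G, χ g - c ≤ χ x →
        b x = ∑ k ∈ Finset.range (N + 1), novPow a k x := by
      intro x hx
      apply finsum_eq_sum_of_support_subset
      intro k hk
      exact hrange x k hx hk
    have hbg : b g = ∑ k ∈ Finset.range (N + 2), novPow a k g := by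
      apply finsum_eq_sum_of_support_subset
      intro k hk
      have h1 : χ g ≤ k * c := pow_chi_bound hχ hc k g hk
      have h2 : (k:ℝ) ≤ χ g / c := by rw [le_div_iff_of_neg hc0]; linarith
      have h4 : k ≤ N := Nat.cast_le.1 (h2.trans hN)
      simp only [Finset.coe_range, Set.mem_Iio]; omega
    have hkc : ∀ k : ℕ, (k:ℝ) * c ≤ 0 :=
      fun k => mul_nonpos_of_nonneg_of_nonpos (Nat.cast_nonneg k) hc0.le
    constructor
    · rw [convSum_left a b g F (fun h h1 h2 => by
        have hb := hCb _ h2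
        have e := chi_inv_mul hχ h g
        exact (hFmem h).2 ⟨h1, by linarith⟩)]
      have e1 : ∀ x ∈ F, a x * b (x⁻¹ * g)
          = ∑ k ∈ Finset.range (N + 1), a x * novPow a k (x⁻¹ * g) := by
        intro x hx
        obtain ⟨hx1, _⟩ := (hFmem x).1 hx
        have hxc := hc x hx1
        have e := chi_inv_mul hχ x g
        rw [hb_at (x⁻¹ * g) (by linarith), Finset.mul_sum]
      rw [Finset.sum_congr rfl e1, Finset.sum_comm]
      have e2 : ∀ k ∈ Finset.range (N + 1),
          ∑ x ∈ F, a x * novPow a k (x⁻¹ * g) = novPow a (k + 1) g := by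
        intro k _
        show _ = novConv a (novPow a k) g
        rw [convSum_left a (novPow a k) g F (fun h h1 h2 => by
          have h3 : χ (h⁻¹ * g) ≤ k * c := pow_chi_bound hχ hc k _ h2
          have e := chi_inv_mul hχ h g
          have := hkc k
          exact (hFmem h).2 ⟨h1, by linarith⟩)]
      rw [Finset.sum_congr rfl e2, hbg,
        Finset.sum_range_succ' (fun i => novPow a i g) (N + 1)]
      show _ = _ + novOne g - novOne g
      rw [add_sub_cancel_right]
    · rw [convSum_right b a g F (fun h h1 h2 => by
        have hb := hCb _ h1
        have e := chi_mul_inv hχ h g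
        exact (hFmem h).2 ⟨h2, by linarith⟩)]
      have e1 : ∀ x ∈ F, b (g * x⁻¹) * a x
          = ∑ k ∈ Finset.range (N + 1), novPow a k (g * x⁻¹) * a x := by
        intro x hx
        obtain ⟨hx1, _⟩ := (hFmem x).1 hx
        have hxc := hc x hx1
        have e := chi_mul_inv hχ x g
        rw [hb_at (g * x⁻¹) (by linarith), Finset.sum_mul]
      rw [Finset.sum_congr rfl e1, Finset.sum_comm]
      have e2 : ∀ k ∈ Finset.range (N + 1),
          ∑ x ∈ F, novPow a k (g * x⁻¹) * a x = novPow a (k + 1) g := by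
        intro k _
        rw [← pow_succ_right hχ ha k]
        rw [convSum_right (novPow a k) a g F (fun h h1 h2 => by
          have h3 : χ (g * h⁻¹) ≤ k * c := pow_chi_bound hχ hc k _ h1
          have e := chi_mul_inv hχ h g
          have := hkc k
          exact (hFmem h).2 ⟨h2, by linarith⟩)]
      rw [Finset.sum_congr rfl e2, hbg,
        Finset.sum_range_succ' (fun i => novPow a i g) (N + 1)]
      show _ = _ + novOne g - novOne g
      rw [add_sub_cancel_right]
  refine ⟨part1, part2, ?_, ?_⟩
  · rw [conv_sub_left hχ novikov_novOne ha part2, novConv_one_left]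
    funext g
    rw [Pi.sub_apply, (hkey g).1]
    ring
  · rw [conv_sub_right hχ novikov_novOne ha part2, novConv_one_right]
    funext g
    rw [Pi.sub_apply, (hkey g).2]
    ring
end

section
/- Let R be a ring, let D_* and E_* be ℤ-indexed chain complexes of left R-modules, let φ : D_* → E_* be a chain map, and let j be an integer. Assume E_j = C_j ⊕ D_j and E_{j+1} = C_{j+1} ⊕ D_j as direct sums of R-modules, and write the boundary ∂^E_{j+1} : C_{j+1} ⊕ D_j → C_j ⊕ D_j in components (∂₁₁, ∂₁₂; ∂₂₁, ∂₂₂), φ_j = (A₁, A₂) : D_j → C_j ⊕ D_j, and φ_{j+1} = (B₁, B₂) : D_{j+1} → C_{j+1} ⊕ D_j. Assume the component ∂₂₂ : D_j → D_j is an isomorphism. Define ψ : D_* → E_* by ψ_i = φ_i for i ≠ j, j+1, ψ_j = (A₁ + ∂₁₂ ∘ ∂₂₂⁻¹, id_{D_j} + A₂), and ψ_{j+1} = (B₁, ∂₂₂⁻¹ ∘ ∂^D_{j+1} + B₂). Then ψ is a chain map and ψ is chain homotopic to φ. -/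
/-- Let `D_*`, `E_*` be ℤ-indexed chain complexes of left
`R`-modules (the map `dD i` is the boundary `∂ : D_{i+1} → D_i`, and
`∂ ∘ ∂ = 0`), let `φ : D_* → E_*` be a chain map and `j : ℤ`.  Assume
`E_j = C_j ⊕ D_j` and `E_{j+1} = C_{j+1} ⊕ D_j` (witnessed by the linear
equivalences `eJ`, `eJ1`), write `∂^E_{j+1}` in components
`(d11, d12; d21, d22)`, `φ_j = (A1, A2)`, `φ_{j+1} = (B1, B2)`, and assume
`d22 : D_j → D_j` is an isomorphism (with inverse `τ`).  Define `ψ` by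
`ψ_i = φ_i` for `i ≠ j, j+1`, `ψ_j = (A1 + d12 ∘ d22⁻¹, id + A2)` and
`ψ_{j+1} = (B1, d22⁻¹ ∘ ∂^D_{j+1} + B2)`.  Then `ψ` is a chain map chain
homotopic to `φ`. -/
theorem statement10 {R : Type*} [Ring R]
    (Dmod Emod : ℤ → Type*)
    [∀ i, AddCommGroup (Dmod i)] [∀ i, Module R (Dmod i)]
    [∀ i, AddCommGroup (Emod i)] [∀ i, Module R (Emod i)]
    (dD : ∀ i : ℤ, Dmod (i + 1) →ₗ[R] Dmod i)
    (dE : ∀ i : ℤ, Emod (i + 1) →ₗ[R] Emod i)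
    (hdD : ∀ i : ℤ, (dD i).comp (dD (i + 1)) = 0)
    (hdE : ∀ i : ℤ, (dE i).comp (dE (i + 1)) = 0)
    (φ : ∀ i : ℤ, Dmod i →ₗ[R] Emod i)
    (hφ : ∀ i : ℤ, (φ i).comp (dD i) = (dE i).comp (φ (i + 1)))
    (j : ℤ) (Cj Cj1 : Type*)
    [AddCommGroup Cj] [Module R Cj] [AddCommGroup Cj1] [Module R Cj1]
    (eJ : Emod j ≃ₗ[R] Cj × Dmod j)
    (eJ1 : Emod (j + 1) ≃ₗ[R] Cj1 × Dmod j)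
    (d11 : Cj1 →ₗ[R] Cj) (d12 : Dmod j →ₗ[R] Cj)
    (d21 : Cj1 →ₗ[R] Dmod j) (d22 : Dmod j →ₗ[R] Dmod j)
    (hcomp : eJ.toLinearMap.comp ((dE j).comp eJ1.symm.toLinearMap) =
      LinearMap.coprod (LinearMap.prod d11 d21) (LinearMap.prod d12 d22))
    (A1 : Dmod j →ₗ[R] Cj) (A2 : Dmod j →ₗ[R] Dmod j)
    (hA : eJ.toLinearMap.comp (φ j) = LinearMap.prod A1 A2)
    (B1 : Dmod (j + 1) →ₗ[R] Cj1) (B2 : Dmod (j + 1) →ₗ[R] Dmod j)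
    (hB : eJ1.toLinearMap.comp (φ (j + 1)) = LinearMap.prod B1 B2)
    (τ : Dmod j →ₗ[R] Dmod j)
    (hτ₁ : d22.comp τ = LinearMap.id) (hτ₂ : τ.comp d22 = LinearMap.id)
    (ψ : ∀ i : ℤ, Dmod i →ₗ[R] Emod i)
    (hψ : ∀ i : ℤ, i ≠ j → i ≠ j + 1 → ψ i = φ i)
    (hψj : eJ.toLinearMap.comp (ψ j) =
      LinearMap.prod (A1 + d12.comp τ) (LinearMap.id + A2))
    (hψj1 : eJ1.toLinearMap.comp (ψ (j + 1)) =
      LinearMap.prod B1 (τ.comp (dD j) + B2)) :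
    (∀ i : ℤ, (ψ i).comp (dD i) = (dE i).comp (ψ (i + 1))) ∧
    ∃ H : ∀ i : ℤ, Dmod i →ₗ[R] Emod (i + 1),
      ∀ i : ℤ, φ (i + 1) - ψ (i + 1) =
        (dE (i + 1)).comp (H (i + 1)) + (H i).comp (dD i) := by

  have hcomp' : ∀ (c : Cj1) (y : Dmod j),
      eJ (dE j (eJ1.symm (c, y))) = (d11 c + d12 y, d21 c + d22 y) := by
    intro c y
    simpa using DFunLike.congr_fun hcomp (c, y)
  have hA' : ∀ x, eJ (φ j x) = (A1 x, A2 x) := by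
    intro x; simpa using DFunLike.congr_fun hA x
  have hB' : ∀ x, eJ1 (φ (j+1) x) = (B1 x, B2 x) := by
    intro x; simpa using DFunLike.congr_fun hB x
  have hψj' : ∀ x, eJ (ψ j x) = (A1 x + d12 (τ x), x + A2 x) := by
    intro x; simpa using DFunLike.congr_fun hψj x
  have hψj1' : ∀ x, eJ1 (ψ (j+1) x) = (B1 x, τ (dD j x) + B2 x) := by
    intro x; simpa using DFunLike.congr_fun hψj1 x
  have hφ' : ∀ (i : ℤ) x, φ i (dD i x) = dE i (φ (i+1) x) := by
    intro i x; simpa using DFunLike.congr_fun (hφ i) x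
  have hτ₁' : ∀ y, d22 (τ y) = y := by
    intro y; simpa using DFunLike.congr_fun hτ₁ y
  have hdD' : ∀ (i : ℤ) x, dD i (dD (i+1) x) = 0 := by
    intro i x; simpa using DFunLike.congr_fun (hdD i) x
  have hdE' : ∀ (i : ℤ) x, dE i (dE (i+1) x) = 0 := by
    intro i x; simpa using DFunLike.congr_fun (hdE i) x
  have hφeq : ∀ x : Dmod (j+1), φ (j+1) x = eJ1.symm (B1 x, B2 x) := by
    intro x; rw [← hB' x]; simp
  have hψeq : ∀ x : Dmod (j+1), ψ (j+1) x = eJ1.symm (B1 x, τ (dD j x) + B2 x) := by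
    intro x; rw [← hψj1' x]; simp
  have key : ∀ x : Dmod (j+1),
      (A1 (dD j x), A2 (dD j x)) = (d11 (B1 x) + d12 (B2 x), d21 (B1 x) + d22 (B2 x)) := by
    intro x
    have h := congrArg eJ (hφ' j x)
    rw [hA', hφeq x, hcomp'] at h
    exact h
  constructor
  · intro i
    by_cases h2 : i + 1 = j
    · subst h2
      have hψi : ψ i = φ i := hψ i (by omega) (by omega)
      ext x
      simp only [LinearMap.comp_apply, hψi]
      rw [hφ' i x]
      have hdiff : ψ (i+1) x = φ (i+1) x + dE (i+1) (eJ1.symm (0, τ x)) := by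
        apply eJ.injective
        rw [map_add, hψj' x, hA' x, hcomp']
        simp [hτ₁', Prod.ext_iff]
        try abel
      rw [hdiff, map_add, hdE']
      simp
    · by_cases h1 : i = j
      · subst h1
        ext x
        apply eJ.injective
        simp only [LinearMap.comp_apply]
        rw [hψj', hψeq x, hcomp']
        have k1 : A1 (dD i x) = d11 (B1 x) + d12 (B2 x) := congrArg Prod.fst (key x)
        have k2 : A2 (dD i x) = d21 (B1 x) + d22 (B2 x) := congrArg Prod.snd (key x)
        refine Prod.ext ?_ ?_ <;> simp only [map_add, hτ₁', k1, k2] <;> abel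
      · by_cases h3 : i = j + 1
        · subst h3
          have hψ2 : ψ (j+1+1) = φ (j+1+1) := hψ _ (by omega) (by omega)
          ext x
          simp only [LinearMap.comp_apply, hψ2]
          rw [← hφ' (j+1) x]
          apply eJ1.injective
          rw [hψj1', hB', hdD' j x]
          simp
        · rw [hψ i h1 h3, hψ (i+1) h2 (by omega)]
          exact hφ i
  · obtain ⟨H, hHj, hH0⟩ : ∃ H : ∀ i : ℤ, Dmod i →ₗ[R] Emod (i+1),
        (∀ x, H j x = eJ1.symm (0, -τ x)) ∧ ∀ i, i ≠ j → H i = 0 := by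
      refine ⟨fun i => if h : i = j then h.symm ▸
        (eJ1.symm.toLinearMap.comp (LinearMap.prod 0 (-τ))) else 0,
        fun x => ?_, fun i hi => ?_⟩
      · simp
      · simp [hi]
    refine ⟨H, fun i => ?_⟩
    by_cases h2 : i + 1 = j
    · subst h2
      have hHi : H i = 0 := hH0 i (by omega)
      ext x
      simp only [LinearMap.sub_apply, LinearMap.add_apply, LinearMap.comp_apply, hHi,
        LinearMap.zero_apply, map_zero, add_zero]
      apply eJ.injective
      rw [map_sub, hA', hψj', hHj, hcomp']
      simp [hτ₁', Prod.ext_iff]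
      try abel
    · by_cases h1 : i = j
      · subst h1
        have hH1 : H (i+1) = 0 := hH0 _ (by omega)
        ext x
        simp only [LinearMap.sub_apply, LinearMap.add_apply, LinearMap.comp_apply, hH1,
          LinearMap.zero_apply, map_zero, zero_add]
        apply eJ1.injective
        rw [map_sub, hB', hψj1', hHj]
        simp [Prod.ext_iff]
      · rw [hψ (i+1) h2 (by omega), hH0 (i+1) h2, hH0 i h1]
        simp
end

section
/- Let R be a ring, let D_* and E_* be ℤ-indexed chain complexes of left R-modules, let j be an integer, and let φ : D_* → E_* be a chain homotopy equivalence such that φ_i : D_i → E_i is an isomorphism for all i ≤ j − 1. Then there exists a chain map ψ : E_* → D_* which is a chain homotopy inverse of φ (i.e. ψ∘φ and φ∘ψ are chain homotopic to the respective identities) and which satisfies ψ_i = φ_i⁻¹ for all i ≤ j − 1. -/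
private def Scast11 {R : Type*} [Ring R] {De Ee : ℤ → Type*}
    [∀ i, AddCommGroup (De i)] [∀ i, Module R (De i)]
    [∀ i, AddCommGroup (Ee i)] [∀ i, Module R (Ee i)]
    (T : ∀ i : ℤ, Ee (i + 1) →ₗ[R] De (i + 1)) (i : ℤ) : Ee i →ₗ[R] De i :=
  cast (by rw [show i - 1 + 1 = i by ring]) (T (i - 1))

private lemma Scast11_add_one {R : Type*} [Ring R] {De Ee : ℤ → Type*}
    [∀ i, AddCommGroup (De i)] [∀ i, Module R (De i)]
    [∀ i, AddCommGroup (Ee i)] [∀ i, Module R (Ee i)]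
    (T : ∀ i : ℤ, Ee (i + 1) →ₗ[R] De (i + 1)) (i : ℤ) :
    Scast11 T (i + 1) = T i := by
  have key : ∀ (a b : ℤ), a = b →
      ∀ (pf : (Ee (a + 1) →ₗ[R] De (a + 1)) = (Ee (b + 1) →ₗ[R] De (b + 1))),
      cast pf (T a) = T b := by
    rintro a b rfl pf; rfl
  exact key (i + 1 - 1) i (by ring) _

/-- Let `D_*`, `E_*` be ℤ-indexed chain complexes of left
`R`-modules (the map `dD i` is the boundary `∂ : D_{i+1} → D_i`, `∂ ∘ ∂ = 0`),
`j : ℤ`, and let `φ : D_* → E_*` be a chain homotopy equivalence such that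
`φ_i` is an isomorphism for all `i ≤ j − 1`.  Then there is a chain map
`ψ : E_* → D_*` which is a chain homotopy inverse of `φ` and satisfies
`ψ_i = φ_i⁻¹` for all `i ≤ j − 1`. -/
theorem statement11 {R : Type*} [Ring R]
    (Dmod Emod : ℤ → Type*)
    [∀ i, AddCommGroup (Dmod i)] [∀ i, Module R (Dmod i)]
    [∀ i, AddCommGroup (Emod i)] [∀ i, Module R (Emod i)]
    (dD : ∀ i : ℤ, Dmod (i + 1) →ₗ[R] Dmod i)
    (dE : ∀ i : ℤ, Emod (i + 1) →ₗ[R] Emod i)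
    (hdD : ∀ i : ℤ, (dD i).comp (dD (i + 1)) = 0)
    (hdE : ∀ i : ℤ, (dE i).comp (dE (i + 1)) = 0)
    (φ : ∀ i : ℤ, Dmod i →ₗ[R] Emod i)
    (hφ : ∀ i : ℤ, (φ i).comp (dD i) = (dE i).comp (φ (i + 1)))
    (j : ℤ)
    (hiso : ∀ i : ℤ, i ≤ j - 1 → Function.Bijective (φ i))
    -- φ is a chain homotopy equivalence
    (hhe : ∃ ψ' : ∀ i : ℤ, Emod i →ₗ[R] Dmod i,
      (∀ i : ℤ, (ψ' i).comp (dE i) = (dD i).comp (ψ' (i + 1))) ∧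
      (∃ H : ∀ i : ℤ, Dmod i →ₗ[R] Dmod (i + 1),
        ∀ i : ℤ, LinearMap.id - (ψ' (i + 1)).comp (φ (i + 1)) =
          (dD (i + 1)).comp (H (i + 1)) + (H i).comp (dD i)) ∧
      (∃ K : ∀ i : ℤ, Emod i →ₗ[R] Emod (i + 1),
        ∀ i : ℤ, LinearMap.id - (φ (i + 1)).comp (ψ' (i + 1)) =
          (dE (i + 1)).comp (K (i + 1)) + (K i).comp (dE i))) :
    ∃ ψ : ∀ i : ℤ, Emod i →ₗ[R] Dmod i,
      -- ψ is a chain map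
      (∀ i : ℤ, (ψ i).comp (dE i) = (dD i).comp (ψ (i + 1))) ∧
      -- ψ ∘ φ is chain homotopic to the identity
      (∃ H : ∀ i : ℤ, Dmod i →ₗ[R] Dmod (i + 1),
        ∀ i : ℤ, LinearMap.id - (ψ (i + 1)).comp (φ (i + 1)) =
          (dD (i + 1)).comp (H (i + 1)) + (H i).comp (dD i)) ∧
      -- φ ∘ ψ is chain homotopic to the identity
      (∃ K : ∀ i : ℤ, Emod i →ₗ[R] Emod (i + 1),
        ∀ i : ℤ, LinearMap.id - (φ (i + 1)).comp (ψ (i + 1)) =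
          (dE (i + 1)).comp (K (i + 1)) + (K i).comp (dE i)) ∧
      -- ψ_i = φ_i⁻¹ for i ≤ j − 1
      (∀ i : ℤ, i ≤ j - 1 →
        (ψ i).comp (φ i) = LinearMap.id ∧ (φ i).comp (ψ i) = LinearMap.id) := by
  classical
  obtain ⟨ψ', hψ', ⟨H, hH⟩, ⟨K, hK⟩⟩ := hhe
  -- pointwise inverse of φ in low degrees, 0 elsewhere
  set inv : ∀ i : ℤ, Emod i →ₗ[R] Dmod i := fun i =>
    if h : i ≤ j - 1 then
      ((LinearEquiv.ofBijective (φ i) (hiso i h)).symm : Emod i →ₗ[R] Dmod i)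
    else 0 with hinv
  have hinvl : ∀ i : ℤ, i ≤ j - 1 → (inv i).comp (φ i) = LinearMap.id := by
    intro i h
    rw [hinv]; simp only [dif_pos h]
    ext x
    exact (LinearEquiv.ofBijective (φ i) (hiso i h)).symm_apply_apply x
  have hinvr : ∀ i : ℤ, i ≤ j - 1 → (φ i).comp (inv i) = LinearMap.id := by
    intro i h
    rw [hinv]; simp only [dif_pos h]
    ext x
    exact (LinearEquiv.ofBijective (φ i) (hiso i h)).apply_symm_apply x
  set G : ∀ i : ℤ, Emod i →ₗ[R] Dmod (i + 1) := fun i => (H i).comp (inv i) with hG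
  set T : ∀ i : ℤ, Emod (i + 1) →ₗ[R] Dmod (i + 1) := fun i => (G i).comp (dE i) with hT
  set S : ∀ i : ℤ, Emod i →ₗ[R] Dmod i := Scast11 T with hSdef
  have hS : ∀ i : ℤ, S (i + 1) = T i := fun i => Scast11_add_one T i
  -- S i ∘ dE i = 0
  have hS0 : ∀ i : ℤ, (S i).comp (dE i) = 0 := by
    intro i
    have h1 : i - 1 + 1 = i := by ring
    have key : (S (i - 1 + 1)).comp (dE (i - 1 + 1)) = 0 := by
      rw [hS (i - 1), hT]
      simp only [LinearMap.comp_assoc]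
      rw [show (dE (i - 1)).comp (dE (i - 1 + 1)) = 0 from hdE (i - 1)]
      simp
    rwa [h1] at key
  set Ψ : ∀ i : ℤ, Emod i →ₗ[R] Dmod i :=
    fun i => ψ' i + (dD i).comp (G i) + S i with hΨ
  have hΨ1 : ∀ i : ℤ, Ψ (i + 1) = ψ' (i + 1) + (dD (i + 1)).comp (G (i + 1)) + (G i).comp (dE i) := by
    intro i
    rw [hΨ]
    simp only
    rw [hS i, hT]
  refine ⟨Ψ, ?_, ⟨fun i => H i - (G i).comp (φ i), ?_⟩,
    ⟨fun i => K i - (φ (i + 1)).comp (G i), ?_⟩, ?_⟩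
  · -- chain map
    intro i
    rw [hΨ1 i, hΨ]
    simp only [LinearMap.add_comp, LinearMap.comp_add, hS0 i, hψ' i, add_zero,
      ← LinearMap.comp_assoc]
    rw [hdD i]
    simp only [LinearMap.zero_comp, add_zero, LinearMap.comp_assoc]
  · -- homotopy ψ∘φ ≃ id
    intro i
    rw [hΨ1 i]
    have e1 : ((G i).comp (dE i)).comp (φ (i + 1)) = ((G i).comp (φ i)).comp (dD i) := by
      rw [LinearMap.comp_assoc, ← hφ i, ← LinearMap.comp_assoc]
    have := hH i
    simp only [LinearMap.add_comp, LinearMap.comp_sub, LinearMap.sub_comp, e1,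
      LinearMap.comp_assoc]
    rw [sub_eq_iff_eq_add] at this
    rw [this]
    abel
  · -- homotopy φ∘ψ ≃ id
    intro i
    rw [hΨ1 i]
    have e2 : (φ (i + 1)).comp ((dD (i + 1)).comp (G (i + 1))) =
        (dE (i + 1)).comp ((φ (i + 1 + 1)).comp (G (i + 1))) := by
      rw [← LinearMap.comp_assoc, hφ (i + 1), LinearMap.comp_assoc]
    have := hK i
    simp only [LinearMap.comp_add, LinearMap.comp_sub, LinearMap.sub_comp, e2,
      LinearMap.comp_assoc]
    rw [sub_eq_iff_eq_add] at this
    rw [this]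
    abel
  · -- ψ = φ⁻¹ in low degrees
    have claim : ∀ k : ℤ, k + 1 ≤ j - 1 →
        (Ψ (k + 1)).comp (φ (k + 1)) = LinearMap.id ∧
        (φ (k + 1)).comp (Ψ (k + 1)) = LinearMap.id := by
      intro k hk1
      have hk : k ≤ j - 1 := by omega
      have left : (Ψ (k + 1)).comp (φ (k + 1)) = LinearMap.id := by
        rw [hΨ1 k, hG]
        simp only [LinearMap.add_comp, LinearMap.comp_assoc]
        rw [show (dE k).comp (φ (k + 1)) = (φ k).comp (dD k) from (hφ k).symm]
        rw [show (inv (k + 1)).comp (φ (k + 1)) = LinearMap.id from hinvl (k + 1) hk1]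
        rw [show (inv k).comp ((φ k).comp (dD k)) = dD k by
          rw [← LinearMap.comp_assoc, hinvl k hk]; ext x; rfl]
        rw [show (H (k + 1)).comp LinearMap.id = H (k + 1) by ext x; rfl]
        have := hH k
        rw [sub_eq_iff_eq_add] at this
        rw [this]
        abel
      refine ⟨left, ?_⟩
      ext e
      obtain ⟨d, rfl⟩ := (hiso (k + 1) hk1).2 e
      have := LinearMap.congr_fun left d
      simp only [LinearMap.comp_apply, LinearMap.id_apply] at this ⊢
      rw [this]
    intro i hi
    have h1 : i - 1 + 1 = i := by ring
    have := claim (i - 1) (by omega)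
    rwa [h1] at this
end

section
/- Let G act continuously and cocompactly on a topological space X (i.e. there is a compact set K ⊆ X with ⋃_{g∈G} g·K = X), let χ : G → ℝ be a homomorphism, and let h₁, h₂ : X → ℝ be two continuous control functions for χ, i.e. hᵢ(g·x) = hᵢ(x) + χ(g) for all g ∈ G, x ∈ X. Then there exists t ≥ 0 such that |h₁(x) − h₂(x)| ≤ t for all x ∈ X, and consequently X_{s,r}(h₁) ⊆ X_{s,r+t}(h₂) ⊆ X_{s,r+2t}(h₁) for every s ∈ ℝ and r ≥ 0. -/
open scoped Pointwise

/-- Let `G` act continuously and cocompactly on a topological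
space `X`, let `χ : G → ℝ` be a homomorphism and let `h₁, h₂ : X → ℝ` be two
continuous control functions for `χ`.  Then there is `t ≥ 0` with
`|h₁(x) − h₂(x)| ≤ t` for all `x`, and consequently
`X_{s,r}(h₁) ⊆ X_{s,r+t}(h₂) ⊆ X_{s,r+2t}(h₁)` for all `s ∈ ℝ`, `r ≥ 0`. -/
theorem statement14 {G X : Type*} [Group G] [TopologicalSpace X] [MulAction G X]
    (hcont : ∀ g : G, Continuous fun x : X => g • x)
    (hcocpt : ∃ K : Set X, IsCompact K ∧ ⋃ g : G, g • K = Set.univ)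
    (χ : G → ℝ) (hχ : ∀ a b : G, χ (a * b) = χ a + χ b)
    (h₁ h₂ : X → ℝ) (hc₁ : Continuous h₁) (hc₂ : Continuous h₂)
    (he₁ : ∀ (g : G) (x : X), h₁ (g • x) = h₁ x + χ g)
    (he₂ : ∀ (g : G) (x : X), h₂ (g • x) = h₂ x + χ g) :
    ∃ t : ℝ, 0 ≤ t ∧ (∀ x : X, |h₁ x - h₂ x| ≤ t) ∧
      ∀ (s r : ℝ), 0 ≤ r →
        {x : X | s - r ≤ h₁ x ∧ h₁ x ≤ s + r} ⊆
            {x : X | s - (r + t) ≤ h₂ x ∧ h₂ x ≤ s + (r + t)} ∧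
        {x : X | s - (r + t) ≤ h₂ x ∧ h₂ x ≤ s + (r + t)} ⊆
            {x : X | s - (r + 2 * t) ≤ h₁ x ∧ h₁ x ≤ s + (r + 2 * t)} := by

  obtain ⟨K, hK, hKu⟩ := hcocpt
  set f : X → ℝ := fun x => |h₁ x - h₂ x| with hf
  have hfc : Continuous f := (hc₁.sub hc₂).abs
  have hinv : ∀ (g : G) (x : X), f (g • x) = f x := by
    intro g x
    simp [hf, he₁, he₂]
  -- bound on K
  have hbd : ∃ t : ℝ, 0 ≤ t ∧ ∀ x ∈ K, f x ≤ t := by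
    rcases K.eq_empty_or_nonempty with h | h
    · exact ⟨0, le_refl 0, by simp [h]⟩
    · obtain ⟨x₀, hx₀, hmax⟩ := hK.exists_isMaxOn h hfc.continuousOn
      exact ⟨max (f x₀) 0, le_max_right _ _, fun x hx => le_trans (hmax hx) (le_max_left _ _)⟩
  obtain ⟨t, ht0, htK⟩ := hbd
  have hbound : ∀ x : X, f x ≤ t := by
    intro x
    have hx : x ∈ ⋃ g : G, g • K := hKu ▸ Set.mem_univ x
    obtain ⟨g, y, hy, rfl⟩ := by
      simpa [Set.mem_iUnion, Set.mem_smul_set] using hx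
    rw [hinv]; exact htK y hy
  refine ⟨t, ht0, hbound, ?_⟩
  intro s r _
  constructor
  · rintro x ⟨hl, hr⟩
    have := hbound x
    rw [abs_sub_le_iff] at this
    constructor <;> linarith [this.1, this.2]
  · rintro x ⟨hl, hr⟩
    have := hbound x
    rw [abs_sub_le_iff] at this
    constructor <;> linarith [this.1, this.2]
end

section
/- Let G act continuously and cocompactly on a nonempty topological space X (i.e. there is a compact set K ⊆ X with ⋃_{g∈G} g·K = X), let χ : G → ℝ be a homomorphism, and let h : X → ℝ be a continuous control function for χ, i.e. h(g·x) = h(x) + χ(g) for all g ∈ G, x ∈ X. Then χ is nonzero if and only if there exists λ ≥ 0 such that for every s ∈ ℝ there is a point x ∈ X with |h(x) − s| ≤ λ (equivalently, every set X_{s,λ}(h) is nonempty). This is the characterization of χ being controlled (−1)-connected (CC⁻¹). -/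
/-! If `χ g ≠ 0`, the values of `h` along the orbit `gⁿ • x₀` are `h x₀ + n χ(g)`, which come
within `|χ g| / 2` of every real number. If `χ = 0`, then `h` is `G`-invariant, so cocompactness
gives `h(X) = h(K)` for a compact `K`, a bounded set that cannot stay within `λ` of all of `ℝ`. -/

open scoped Pointwise

open Set

theorem map_zpow_eq_mul_of_map_mul {G : Type*} [Group G] {χ : G → ℝ}
    (hχ : ∀ a b : G, χ (a * b) = χ a + χ b) (g : G) (n : ℤ) : χ (g ^ n) = n * χ g := by
  let φ : Additive G →+ ℝ := AddMonoidHom.mk' (fun a => χ a.toMul) fun a b => hχ a.toMul b.toMul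
  simpa [φ, zsmul_eq_mul] using map_zsmul φ n (Additive.ofMul g)

theorem exists_int_abs_add_mul_sub_le (a s : ℝ) {c : ℝ} (hc : c ≠ 0) :
    ∃ n : ℤ, |a + n * c - s| ≤ |c| / 2 := by
  set t := (s - a) / c
  refine ⟨round t, ?_⟩
  have hdiff : a + round t * c - s = c * (round t - t) := by
    simp only [t]; field_simp; ring
  have hround : |(round t : ℝ) - t| ≤ 1 / 2 := by simpa [abs_sub_comm] using abs_sub_round t
  calc |a + round t * c - s| = |c| * |(round t : ℝ) - t| := by rw [hdiff, abs_mul]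
    _ ≤ |c| * (1 / 2) := by gcongr
    _ = |c| / 2 := by ring

theorem range_subset_image_of_iUnion_smul_eq_univ {G X β : Type*} [SMul G X] {h : X → β}
    (hinv : ∀ (g : G) (x : X), h (g • x) = h x) {K : Set X} (hK : ⋃ g : G, g • K = univ) :
    range h ⊆ h '' K := by
  rintro _ ⟨x, rfl⟩
  obtain ⟨g, k, hk, rfl⟩ := mem_iUnion.mp (hK ▸ mem_univ x)
  exact ⟨k, hk, (hinv g k).symm⟩

theorem statement15_general {G X : Type*} [Group G] [TopologicalSpace X] [MulAction G X]
    [Nonempty X]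
    (hcocpt : ∃ K : Set X, IsCompact K ∧ ⋃ g : G, g • K = Set.univ)
    (χ : G → ℝ) (hχ : ∀ a b : G, χ (a * b) = χ a + χ b)
    (h : X → ℝ) (hc : Continuous h)
    (he : ∀ (g : G) (x : X), h (g • x) = h x + χ g) :
    (∃ g : G, χ g ≠ 0) ↔ ∃ l : ℝ, 0 ≤ l ∧ ∀ s : ℝ, ∃ x : X, |h x - s| ≤ l := by
  constructor
  · rintro ⟨g, hg⟩
    obtain ⟨x₀⟩ := ‹Nonempty X›
    refine ⟨|χ g| / 2, by positivity, fun s => ?_⟩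
    obtain ⟨n, hn⟩ := exists_int_abs_add_mul_sub_le (h x₀) s hg
    exact ⟨g ^ n • x₀, by rwa [he, map_zpow_eq_mul_of_map_mul hχ]⟩
  · rintro ⟨l, -, hl⟩
    by_contra! hχ0
    obtain ⟨K, hK, hKcov⟩ := hcocpt
    have hinv : ∀ (g : G) (x : X), h (g • x) = h x := fun g x => by rw [he, hχ0 g, add_zero]
    obtain ⟨M, hM⟩ :=
      (hK.image hc).bddAbove.mono (range_subset_image_of_iUnion_smul_eq_univ hinv hKcov)
    obtain ⟨x, hx⟩ := hl (M + l + 1)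
    linarith [hM (mem_range_self x), (abs_le.mp hx).1]

/-- Let `G` act continuously and cocompactly on a nonempty
topological space `X`, let `χ : G → ℝ` be a homomorphism and let `h : X → ℝ` be
a continuous control function for `χ`.  Then `χ` is nonzero if and only if
there exists `λ ≥ 0` such that for every `s ∈ ℝ` there is `x ∈ X` with
`|h(x) − s| ≤ λ` (i.e. every `X_{s,λ}(h)` is nonempty).  This characterizes
`χ` being controlled `(−1)`-connected (`CC⁻¹`). -/
theorem statement15 {G X : Type*} [Group G] [TopologicalSpace X] [MulAction G X]
    [Nonempty X]
    (hcont : ∀ g : G, Continuous fun x : X => g • x)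
    (hcocpt : ∃ K : Set X, IsCompact K ∧ ⋃ g : G, g • K = Set.univ)
    (χ : G → ℝ) (hχ : ∀ a b : G, χ (a * b) = χ a + χ b)
    (h : X → ℝ) (hc : Continuous h)
    (he : ∀ (g : G) (x : X), h (g • x) = h x + χ g) :
    (∃ g : G, χ g ≠ 0) ↔ ∃ l : ℝ, 0 ≤ l ∧ ∀ s : ℝ, ∃ x : X, |h x - s| ≤ l :=
  statement15_general hcocpt χ hχ h hc he
end
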